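/- Let A, B, F be random variables on a finite probability space. Suppose F is independent of B and A = g(F) almost surely. Then for every a and b with P(A = a) > 0, P(B = b | A = a) = P(B = b). Conversely, if there exist a, b with P(A = a) > 0 and P(B = b | A = a) ≠ P(B = b), then for every F with A = g(F) a.s., F is dependent on B, and moreover the total variation distance between the conditional law of B given F = f (for f with g(f) = a, averaged appropriately) and the marginal law of B is at least |P(B = b | A = a) - P(B = b)| for some f in the support with g(f) = a. -/

import Mathlib

open Finset Real
open scoped Classical

noncomputable def Pr {Ω : Type*} [Fintype Ω] (p : Ω → ℝ) (E : Ω → Prop) : ℝ :=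
  ∑ ω, if E ω then p ω else 0

def Indep {Ω : Type*} [Fintype Ω] {α β : Type*} (p : Ω → ℝ)
    (F : Ω → α) (B : Ω → β) : Prop :=
  ∀ f b, Pr p (fun ω => F ω = f ∧ B ω = b) =
    Pr p (fun ω => F ω = f) * Pr p (fun ω => B ω = b)

/-! The conditional deviation `P(B = b | A = a) - P(B = b)` is the average, with weights
`P(F = f | A = a)`, of the deviations `P(B = b | F = f) - P(B = b)` over the fibre `g f = a`;
so one of them is at least as large in absolute value. Each of those is a coordinate of the
signed measure `P(B ∈ · | F = f) - P(B ∈ ·)` of total mass zero, hence is bounded by half its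
total variation. -/

theorem abs_le_half_sum_abs_of_sum_eq_zero {ι K : Type*} [Fintype ι] [Field K] [LinearOrder K]
    [IsStrictOrderedRing K] (x : ι → K) (hx : ∑ j, x j = 0) (i : ι) :
    |x i| ≤ (1 / 2) * ∑ j, |x j| := by
  have hrest : x i = -∑ j ∈ univ.erase i, x j := by
    rw [← add_sum_erase _ _ (mem_univ i)] at hx
    linarith
  have hle : |x i| ≤ ∑ j ∈ univ.erase i, |x j| := by
    rw [hrest, abs_neg]
    exact abs_sum_le_sum_abs _ _
  rw [← add_sum_erase _ _ (mem_univ i)]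
  linarith

theorem exists_pos_weight_abs_le_of_sum_mul_eq {ι K : Type*} [Field K] [LinearOrder K]
    [IsStrictOrderedRing K] (s : Finset ι) (w d : ι → K) (D W : K)
    (hw : ∀ i ∈ s, 0 ≤ w i) (hW : ∑ i ∈ s, w i = W) (hWpos : 0 < W)
    (hD : ∑ i ∈ s, w i * d i = D * W) :
    ∃ i ∈ s, 0 < w i ∧ |D| ≤ |d i| := by
  set t := s.filter (fun i => 0 < w i)
  have hdrop : ∀ v : ι → K, ∑ i ∈ t, w i * v i = ∑ i ∈ s, w i * v i := fun v =>
    sum_filter_of_ne fun i hi hne => lt_of_le_of_ne (hw i hi) fun h => hne (by rw [← h, zero_mul])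
  have ht : t.Nonempty := by
    by_contra hempty
    rw [not_nonempty_iff_eq_empty] at hempty
    have := hdrop fun _ => 1
    simp only [hempty, sum_empty, mul_one, hW] at this
    exact hWpos.ne this
  have hsum_le : ∑ i ∈ t, w i * |D| ≤ ∑ i ∈ t, w i * |d i| := calc
    ∑ i ∈ t, w i * |D| = |∑ i ∈ s, w i * d i| := by
      rw [hdrop, ← sum_mul, hW, hD, abs_mul, abs_of_pos hWpos, mul_comm]
    _ ≤ ∑ i ∈ s, |w i * d i| := abs_sum_le_sum_abs _ _
    _ = ∑ i ∈ t, w i * |d i| := by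
      rw [hdrop]
      exact sum_congr rfl fun i hi => by rw [abs_mul, abs_of_nonneg (hw i hi)]
  obtain ⟨i, hit, hi⟩ := exists_le_of_sum_le ht hsum_le
  have hwi : 0 < w i := (mem_filter.1 hit).2
  exact ⟨i, (mem_filter.1 hit).1, hwi, le_of_mul_le_mul_left hi hwi⟩

section Pr

variable {Ω : Type*} [Fintype Ω] (p : Ω → ℝ)

theorem Pr_nonneg (hp : ∀ ω, 0 ≤ p ω) (E : Ω → Prop) : 0 ≤ Pr p E :=
  sum_nonneg fun ω _ => by split_ifs <;> simp [hp ω]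

theorem Pr_mono (hp : ∀ ω, 0 ≤ p ω) {E E' : Ω → Prop} (h : ∀ ω, E ω → E' ω) :
    Pr p E ≤ Pr p E' :=
  sum_le_sum fun ω _ => by
    by_cases hE : E ω
    · simp [hE, h ω hE]
    · split_ifs <;> simp [hp ω]

theorem Pr_congr_ae {E E' : Ω → Prop} (h : ∀ ω, p ω ≠ 0 → (E ω ↔ E' ω)) :
    Pr p E = Pr p E' :=
  sum_congr rfl fun ω _ => by
    by_cases h0 : p ω = 0
    · simp [h0]
    · simp [h ω h0]

theorem Pr_and_comm (E E' : Ω → Prop) :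
    Pr p (fun ω => E ω ∧ E' ω) = Pr p (fun ω => E' ω ∧ E ω) :=
  Pr_congr_ae p fun _ _ => and_comm

theorem Pr_true : Pr p (fun _ => True) = ∑ ω, p ω := by
  simp [Pr]

theorem ae_of_Pr_eq_one (hp : ∀ ω, 0 ≤ p ω) (hsum : ∑ ω, p ω = 1) {E : Ω → Prop}
    (hE : Pr p E = 1) : ∀ ω, p ω ≠ 0 → E ω := by
  have hzero : ∑ ω, (p ω - if E ω then p ω else 0) = 0 := by
    rw [sum_sub_distrib, hsum]
    exact sub_eq_zero.2 hE.symm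
  intro ω hω
  by_contra hnot
  have := (sum_eq_zero_iff_of_nonneg fun ω _ => by split_ifs <;> simp [hp ω]).1 hzero ω
    (mem_univ ω)
  simp [hnot, hω] at this

theorem sum_Pr_and_eq {ι : Type*} (E : Ω → Prop) (X : Ω → ι) (s : Finset ι) :
    ∑ x ∈ s, Pr p (fun ω => E ω ∧ X ω = x) = Pr p (fun ω => E ω ∧ X ω ∈ s) := by
  unfold Pr
  rw [sum_comm]
  refine sum_congr rfl fun ω _ => ?_
  by_cases hE : E ω <;> simp [hE]

theorem sum_Pr_eq_Pr {ι : Type*} [Fintype ι] (X : Ω → ι) (E : Ω → Prop) :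
    ∑ x, Pr p (fun ω => X ω = x ∧ E ω) = Pr p E := by
  simp_rw [Pr_and_comm p _ E, sum_Pr_and_eq, mem_univ, and_true]

theorem sum_Pr_eq_sum {ι : Type*} [Fintype ι] (X : Ω → ι) :
    ∑ x, Pr p (fun ω => X ω = x) = ∑ ω, p ω := by
  simpa [Pr_true] using sum_Pr_eq_Pr p X fun _ => True

-- Holds also when `Pr p E = 0` (division by zero gives `0`), as then `Pr p (C ∧ E) = 0` too.
theorem Pr_mul_Pr_and_div (hp : ∀ ω, 0 ≤ p ω) (C E : Ω → Prop) :
    Pr p E * (Pr p (fun ω => C ω ∧ E ω) / Pr p E) = Pr p (fun ω => C ω ∧ E ω) := by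
  by_cases hE : Pr p E = 0
  · rw [hE, zero_mul]
    exact le_antisymm (hE ▸ Pr_mono p hp fun _ h => h.2) (Pr_nonneg p hp _) |>.symm
  · exact mul_div_cancel₀ _ hE

theorem sum_Pr_and_div_sub_Pr_eq_zero (hsum : ∑ ω, p ω = 1) {β : Type*} [Fintype β]
    (B : Ω → β) {E : Ω → Prop} (hE : Pr p E ≠ 0) :
    ∑ b, (Pr p (fun ω => B ω = b ∧ E ω) / Pr p E - Pr p (fun ω => B ω = b)) = 0 := by
  rw [sum_sub_distrib, ← sum_div, sum_Pr_eq_Pr, sum_Pr_eq_sum, hsum, div_self hE, sub_self]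

section Fibre

variable {α φ : Type*} [Fintype φ] (A : Ω → α) (F : Ω → φ) (g : φ → α)

theorem Pr_and_eq_sum_fiber (hA : ∀ ω, p ω ≠ 0 → A ω = g (F ω)) (C : Ω → Prop) (a : α) :
    Pr p (fun ω => C ω ∧ A ω = a) =
      ∑ f ∈ univ.filter (fun f => g f = a), Pr p (fun ω => C ω ∧ F ω = f) := by
  rw [sum_Pr_and_eq]
  exact Pr_congr_ae p fun ω hω => by simp [hA ω hω]

theorem Pr_eq_sum_fiber (hA : ∀ ω, p ω ≠ 0 → A ω = g (F ω)) (a : α) :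
    Pr p (fun ω => A ω = a) =
      ∑ f ∈ univ.filter (fun f => g f = a), Pr p (fun ω => F ω = f) := by
  simpa using Pr_and_eq_sum_fiber p A F g hA (fun _ => True) a

theorem Pr_and_eq_mul_of_indep (hA : ∀ ω, p ω ≠ 0 → A ω = g (F ω)) {β : Type*} (B : Ω → β)
    (hI : Indep p F B) (a : α) (b : β) :
    Pr p (fun ω => B ω = b ∧ A ω = a) = Pr p (fun ω => B ω = b) * Pr p (fun ω => A ω = a) := by
  rw [Pr_and_eq_sum_fiber p A F g hA, Pr_eq_sum_fiber p A F g hA, mul_sum]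
  exact sum_congr rfl fun f _ => by rw [Pr_and_comm, hI, mul_comm]

theorem sum_fiber_Pr_mul_deviation (hA : ∀ ω, p ω ≠ 0 → A ω = g (F ω)) (hp : ∀ ω, 0 ≤ p ω)
    (C : Ω → Prop) (a : α) (ha : Pr p (fun ω => A ω = a) ≠ 0) :
    ∑ f ∈ univ.filter (fun f => g f = a),
        Pr p (fun ω => F ω = f) * (Pr p (fun ω => C ω ∧ F ω = f) / Pr p (fun ω => F ω = f) -
          Pr p C) =
      (Pr p (fun ω => C ω ∧ A ω = a) / Pr p (fun ω => A ω = a) - Pr p C) *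
        Pr p (fun ω => A ω = a) := by
  simp_rw [mul_sub, Pr_mul_Pr_and_div p hp]
  rw [sum_sub_distrib, ← sum_mul, ← Pr_and_eq_sum_fiber p A F g hA,
    ← Pr_eq_sum_fiber p A F g hA, sub_mul, div_mul_cancel₀ _ ha, mul_comm]

end Fibre

end Pr

theorem quantitative_disentanglement_bound_general
    {Ω α β φ : Type*} [Fintype Ω] [Fintype β] [Fintype φ]
    (p : Ω → ℝ) (hp : ∀ ω, 0 ≤ p ω) (hsum : ∑ ω, p ω = 1)
    (A : Ω → α) (B : Ω → β) (F : Ω → φ)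
    (g : φ → α) (hg : Pr p (fun ω => A ω = g (F ω)) = 1) :
    (Indep p F B →
      ∀ a b, 0 < Pr p (fun ω => A ω = a) →
        Pr p (fun ω => B ω = b ∧ A ω = a) / Pr p (fun ω => A ω = a) =
          Pr p (fun ω => B ω = b)) ∧
    (∀ a b, 0 < Pr p (fun ω => A ω = a) →
      Pr p (fun ω => B ω = b ∧ A ω = a) / Pr p (fun ω => A ω = a) ≠
        Pr p (fun ω => B ω = b) →
      ¬ Indep p F B ∧
        ∃ f, 0 < Pr p (fun ω => F ω = f) ∧ g f = a ∧
          |Pr p (fun ω => B ω = b ∧ A ω = a) / Pr p (fun ω => A ω = a) -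
              Pr p (fun ω => B ω = b)| ≤
            (1 / 2) * ∑ b',
              |Pr p (fun ω => B ω = b' ∧ F ω = f) / Pr p (fun ω => F ω = f) -
                Pr p (fun ω => B ω = b')|) := by
  have hA := ae_of_Pr_eq_one p hp hsum hg
  have hindep : Indep p F B → ∀ a b, 0 < Pr p (fun ω => A ω = a) →
      Pr p (fun ω => B ω = b ∧ A ω = a) / Pr p (fun ω => A ω = a) =
        Pr p (fun ω => B ω = b) := fun hI a b ha => by
    rw [Pr_and_eq_mul_of_indep p A F g hA B hI, mul_div_cancel_right₀ _ ha.ne']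
  refine ⟨hindep, fun a b ha hne => ⟨fun hI => hne (hindep hI a b ha), ?_⟩⟩
  obtain ⟨f, hf_fiber, hf_pos, hf_dev⟩ := exists_pos_weight_abs_le_of_sum_mul_eq _ _ _ _ _
    (fun f _ => Pr_nonneg p hp _) (Pr_eq_sum_fiber p A F g hA a).symm ha
    (sum_fiber_Pr_mul_deviation p A F g hA hp (fun ω => B ω = b) a ha.ne')
  exact ⟨f, hf_pos, (mem_filter.1 hf_fiber).2, hf_dev.trans <|
    abs_le_half_sum_abs_of_sum_eq_zero _ (sum_Pr_and_div_sub_Pr_eq_zero p hsum B hf_pos.ne') b⟩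

theorem quantitative_disentanglement_bound
    {Ω α β φ : Type*} [Fintype Ω] [Fintype α] [Fintype β] [Fintype φ]
    (p : Ω → ℝ) (hp : ∀ ω, 0 ≤ p ω) (hsum : ∑ ω, p ω = 1)
    (A : Ω → α) (B : Ω → β) (F : Ω → φ)
    (g : φ → α) (hg : Pr p (fun ω => A ω = g (F ω)) = 1) :
    (Indep p F B →
      ∀ a b, 0 < Pr p (fun ω => A ω = a) →
        Pr p (fun ω => B ω = b ∧ A ω = a) / Pr p (fun ω => A ω = a) =
          Pr p (fun ω => B ω = b)) ∧
    (∀ a b, 0 < Pr p (fun ω => A ω = a) →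
      Pr p (fun ω => B ω = b ∧ A ω = a) / Pr p (fun ω => A ω = a) ≠
        Pr p (fun ω => B ω = b) →
      ¬ Indep p F B ∧
        ∃ f, 0 < Pr p (fun ω => F ω = f) ∧ g f = a ∧
          |Pr p (fun ω => B ω = b ∧ A ω = a) / Pr p (fun ω => A ω = a) -
              Pr p (fun ω => B ω = b)| ≤
            (1 / 2) * ∑ b',
              |Pr p (fun ω => B ω = b' ∧ F ω = f) / Pr p (fun ω => F ω = f) -
                Pr p (fun ω => B ω = b')|) :=
  quantitative_disentanglement_bound_general p hp hsum A B F g hg
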